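/- For every w ∈ ℝ^d, the regularized loss L_λ satisfies the exact identity ∇L_λ(w)·(c + λw) = (1−β) Var_{x∼φ(·;w)}[(c + λw)·x] + βρ Var_{x∼φ(·;ρw)}[(c + λw)·x]. -/

import Mathlib

/-! The Gibbs family is an exponential family with log-partition function
`A(w) = log ∑ exp(w·y)`: `log φ(x;w) = w·x − A(w)` and `∇A(w)` is the Gibbs mean, so
`∇_w E_w[f] = Cov_w(f(x), x)` and the entropy contributes `∇H(w) = Cov_w(w·x, x)`. Hence
`E_w[a·x] + λH(w)` has gradient `Cov_w((a + λw)·x, x)`. The slow component enters through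
`w ↦ ρw` with `a = ρc`, which scales `c + λw` by `ρ`; pairing with `c + λw` turns both covariances
into variances. -/

open Finset
open scoped InnerProductSpace BigOperators

noncomputable section

/-- The Gibbs distribution on a finite set `X ⊆ ℝ^d` with parameter `w`:
`φ(x; w) = exp(w·x) / ∑_{y ∈ X} exp(w·y)`. -/
def gibbs {d : ℕ} (X : Finset (EuclideanSpace ℝ (Fin d)))
    (w x : EuclideanSpace ℝ (Fin d)) : ℝ :=
  Real.exp ⟪w, x⟫_ℝ / ∑ y ∈ X, Real.exp ⟪w, y⟫_ℝ

/-- Expectation of a real function under the Gibbs distribution. -/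
def gibbsExp {d : ℕ} (X : Finset (EuclideanSpace ℝ (Fin d)))
    (w : EuclideanSpace ℝ (Fin d)) (f : EuclideanSpace ℝ (Fin d) → ℝ) : ℝ :=
  ∑ x ∈ X, gibbs X w x * f x

/-- Variance of a real function under the Gibbs distribution. -/
def gibbsVar {d : ℕ} (X : Finset (EuclideanSpace ℝ (Fin d)))
    (w : EuclideanSpace ℝ (Fin d)) (f : EuclideanSpace ℝ (Fin d) → ℝ) : ℝ :=
  gibbsExp X w (fun x => f x ^ 2) - (gibbsExp X w f) ^ 2

/-- Mean (a vector) of the Gibbs distribution. -/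
def gibbsMean {d : ℕ} (X : Finset (EuclideanSpace ℝ (Fin d)))
    (w : EuclideanSpace ℝ (Fin d)) : EuclideanSpace ℝ (Fin d) :=
  ∑ x ∈ X, gibbs X w x • x

/-- The negative entropy `H(w) = E_{x ∼ φ(·;w)}[log φ(x;w)]`. -/
def negEnt {d : ℕ} (X : Finset (EuclideanSpace ℝ (Fin d)))
    (w : EuclideanSpace ℝ (Fin d)) : ℝ :=
  ∑ x ∈ X, gibbs X w x * Real.log (gibbs X w x)


/-- The fast/slow mixture generator `p(x;w) = (1−β)φ(x;w) + βφ(x;ρw)`. -/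
def pmix {d : ℕ} (X : Finset (EuclideanSpace ℝ (Fin d))) (β ρ : ℝ)
    (w x : EuclideanSpace ℝ (Fin d)) : ℝ :=
  (1 - β) * gibbs X w x + β * gibbs X (ρ • w) x

/-- The regularizer `R(w) = (1−β)H(w) + (β/ρ)H(ρw)`. -/
def reg {d : ℕ} (X : Finset (EuclideanSpace ℝ (Fin d))) (β ρ : ℝ)
    (w : EuclideanSpace ℝ (Fin d)) : ℝ :=
  (1 - β) * negEnt X w + (β / ρ) * negEnt X (ρ • w)

/-- The regularized loss `L_λ(w) = E_{x∼p(·;w)}[c·x] + λ R(w)`. -/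
def rloss {d : ℕ} (X : Finset (EuclideanSpace ℝ (Fin d))) (β ρ lam : ℝ)
    (c w : EuclideanSpace ℝ (Fin d)) : ℝ :=
  (∑ x ∈ X, pmix X β ρ w x * ⟪c, x⟫_ℝ) + lam * reg X β ρ w

open Real
open InnerProductSpace (toDual)

section Gibbs

variable {d : ℕ} {X : Finset (EuclideanSpace ℝ (Fin d))}

def logPartition (X : Finset (EuclideanSpace ℝ (Fin d))) (w : EuclideanSpace ℝ (Fin d)) : ℝ :=
  log (∑ y ∈ X, exp ⟪w, y⟫_ℝ)

def gibbsCov (X : Finset (EuclideanSpace ℝ (Fin d))) (w : EuclideanSpace ℝ (Fin d))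
    (f : EuclideanSpace ℝ (Fin d) → ℝ) : EuclideanSpace ℝ (Fin d) :=
  ∑ x ∈ X, (gibbs X w x * f x) • (x - gibbsMean X w)

lemma sum_exp_inner_pos (hX : X.Nonempty) (w : EuclideanSpace ℝ (Fin d)) :
    0 < ∑ y ∈ X, exp ⟪w, y⟫_ℝ :=
  sum_pos (fun _ _ => exp_pos _) hX

lemma gibbs_eq_exp (hX : X.Nonempty) (w x : EuclideanSpace ℝ (Fin d)) :
    gibbs X w x = exp (⟪w, x⟫_ℝ - logPartition X w) := by
  rw [exp_sub, logPartition, exp_log (sum_exp_inner_pos hX w), gibbs]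

lemma log_gibbs (hX : X.Nonempty) (w x : EuclideanSpace ℝ (Fin d)) :
    log (gibbs X w x) = ⟪w, x⟫_ℝ - logPartition X w := by
  rw [gibbs_eq_exp hX, log_exp]

lemma sum_gibbs (hX : X.Nonempty) (w : EuclideanSpace ℝ (Fin d)) :
    ∑ x ∈ X, gibbs X w x = 1 := by
  simp only [gibbs, ← sum_div]
  exact div_self (sum_exp_inner_pos hX w).ne'

lemma gibbsCov_add (w : EuclideanSpace ℝ (Fin d)) (f g : EuclideanSpace ℝ (Fin d) → ℝ) :
    gibbsCov X w (fun x => f x + g x) = gibbsCov X w f + gibbsCov X w g := by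
  simp only [gibbsCov, mul_add, add_smul, sum_add_distrib]

lemma gibbsCov_const_mul (w : EuclideanSpace ℝ (Fin d)) (s : ℝ)
    (f : EuclideanSpace ℝ (Fin d) → ℝ) :
    gibbsCov X w (fun x => s * f x) = s • gibbsCov X w f := by
  simp only [gibbsCov, smul_sum, smul_smul, mul_left_comm]

lemma gibbsCov_const (hX : X.Nonempty) (w : EuclideanSpace ℝ (Fin d)) (k : ℝ) :
    gibbsCov X w (fun _ => k) = 0 := by
  simp only [gibbsCov, mul_comm _ k, mul_smul, ← smul_sum, smul_sub, sum_sub_distrib, ← sum_smul,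
    sum_gibbs hX, one_smul, gibbsMean, sub_self]

lemma inner_gibbsCov_inner (w v : EuclideanSpace ℝ (Fin d)) :
    ⟪gibbsCov X w (fun x => ⟪v, x⟫_ℝ), v⟫_ℝ = gibbsVar X w (fun x => ⟪v, x⟫_ℝ) := by
  have hmean : ⟪gibbsMean X w, v⟫_ℝ = gibbsExp X w (fun x => ⟪v, x⟫_ℝ) := by
    rw [gibbsMean, sum_inner]
    exact sum_congr rfl fun x _ => by rw [real_inner_smul_left, real_inner_comm]
  simp only [gibbsCov, gibbsVar, sum_inner, real_inner_smul_left, inner_sub_left, hmean, mul_sub,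
    sum_sub_distrib, ← sum_mul]
  simp only [gibbsExp, real_inner_comm v, sq, mul_assoc]

lemma hasGradientAt_inner_left (x w : EuclideanSpace ℝ (Fin d)) :
    HasGradientAt (fun w => ⟪w, x⟫_ℝ) x w := by
  have h : (fun w => ⟪w, x⟫_ℝ) = toDual ℝ (EuclideanSpace ℝ (Fin d)) x := by
    funext w
    rw [InnerProductSpace.toDual_apply_apply, real_inner_comm]
  rw [hasGradientAt_iff_hasFDerivAt, h]
  exact ContinuousLinearMap.hasFDerivAt _



lemma hasGradientAt_logPartition (hX : X.Nonempty) (w : EuclideanSpace ℝ (Fin d)) :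
    HasGradientAt (logPartition X) (gibbsMean X w) w := by
  have hZ := HasFDerivAt.fun_sum fun y (_ : y ∈ X) =>
    (hasGradientAt_iff_hasFDerivAt.mp (hasGradientAt_inner_left y w)).exp
  refine hasGradientAt_iff_hasFDerivAt.mpr ((hZ.log (sum_exp_inner_pos hX w).ne').congr_fderiv ?_)
  simp only [gibbsMean, gibbs, map_sum, map_smul, smul_sum, smul_smul, div_eq_inv_mul]

lemma hasGradientAt_gibbs (hX : X.Nonempty) (w x : EuclideanSpace ℝ (Fin d)) :
    HasGradientAt (fun w => gibbs X w x) (gibbs X w x • (x - gibbsMean X w)) w := by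
  have h := ((hasGradientAt_iff_hasFDerivAt.mp (hasGradientAt_inner_left x w)).sub
    (hasGradientAt_iff_hasFDerivAt.mp (hasGradientAt_logPartition hX w))).exp
  simp only [gibbs_eq_exp hX]
  rwa [hasGradientAt_iff_hasFDerivAt, map_smul, map_sub]

lemma hasGradientAt_gibbsExp (hX : X.Nonempty) (w : EuclideanSpace ℝ (Fin d))
    (f : EuclideanSpace ℝ (Fin d) → ℝ) :
    HasGradientAt (fun w => gibbsExp X w f) (gibbsCov X w f) w := by
  have h := HasFDerivAt.fun_sum fun x (_ : x ∈ X) =>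
    (hasGradientAt_iff_hasFDerivAt.mp (hasGradientAt_gibbs hX w x)).mul_const (f x)
  refine hasGradientAt_iff_hasFDerivAt.mpr (h.congr_fderiv ?_)
  simp only [gibbsCov, map_sum, map_smul, smul_smul, mul_comm]

lemma hasGradientAt_negEnt (hX : X.Nonempty) (w : EuclideanSpace ℝ (Fin d)) :
    HasGradientAt (negEnt X) (gibbsCov X w (fun x => ⟪w, x⟫_ℝ)) w := by
  have hnegEnt : negEnt X = fun w => ∑ x ∈ X, gibbs X w x * (⟪w, x⟫_ℝ - logPartition X w) :=
    funext fun w => sum_congr rfl fun x _ => by rw [log_gibbs hX]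
  have h := HasFDerivAt.fun_sum fun x (_ : x ∈ X) =>
    (hasGradientAt_iff_hasFDerivAt.mp (hasGradientAt_gibbs hX w x)).mul
      ((hasGradientAt_iff_hasFDerivAt.mp (hasGradientAt_inner_left x w)).sub
        (hasGradientAt_iff_hasFDerivAt.mp (hasGradientAt_logPartition hX w)))
  rw [hnegEnt]
  refine hasGradientAt_iff_hasFDerivAt.mpr (h.congr_fderiv ?_)
  have hshift : gibbsCov X w (fun x => ⟪w, x⟫_ℝ) =
      gibbsCov X w (fun x => ⟪w, x⟫_ℝ + (1 - logPartition X w)) := by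
    rw [gibbsCov_add, gibbsCov_const hX, add_zero]
  rw [hshift, gibbsCov, map_sum]
  refine sum_congr rfl fun x _ => ?_
  simp only [← map_sub, ← map_smul, ← map_add, Pi.sub_apply]
  congr 1
  module

def gibbsFreeEnergy (X : Finset (EuclideanSpace ℝ (Fin d))) (a : EuclideanSpace ℝ (Fin d))
    (lam : ℝ) (w : EuclideanSpace ℝ (Fin d)) : ℝ :=
  gibbsExp X w (fun x => ⟪a, x⟫_ℝ) + lam * negEnt X w

lemma hasGradientAt_gibbsFreeEnergy (hX : X.Nonempty) (a : EuclideanSpace ℝ (Fin d)) (lam : ℝ)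
    (w : EuclideanSpace ℝ (Fin d)) :
    HasGradientAt (gibbsFreeEnergy X a lam) (gibbsCov X w (fun x => ⟪a + lam • w, x⟫_ℝ)) w := by
  have h := (hasGradientAt_iff_hasFDerivAt.mp (hasGradientAt_gibbsExp hX w (fun x => ⟪a, x⟫_ℝ))).add
    ((hasGradientAt_iff_hasFDerivAt.mp (hasGradientAt_negEnt hX w)).const_mul lam)
  refine hasGradientAt_iff_hasFDerivAt.mpr (h.congr_fderiv ?_)
  simp only [inner_add_left, real_inner_smul_left, gibbsCov_add, gibbsCov_const_mul, map_add,
    map_smul]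

lemma rloss_eq_gibbsFreeEnergy {β ρ : ℝ} (hρ : ρ ≠ 0) (lam : ℝ) (c : EuclideanSpace ℝ (Fin d)) :
    rloss X β ρ lam c =
      fun w => (1 - β) * gibbsFreeEnergy X c lam w + β / ρ * gibbsFreeEnergy X (ρ • c) lam (ρ • w) := by
  funext w
  simp only [rloss, reg, pmix, gibbsFreeEnergy, gibbsExp, add_mul, sum_add_distrib, mul_assoc,
    ← mul_sum, real_inner_smul_left, mul_left_comm _ ρ]
  field_simp
  ring

lemma hasGradientAt_rloss (hX : X.Nonempty) {β ρ : ℝ} (hρ : ρ ≠ 0) (lam : ℝ)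
    (c w : EuclideanSpace ℝ (Fin d)) :
    HasGradientAt (rloss X β ρ lam c)
      ((1 - β) • gibbsCov X w (fun x => ⟪c + lam • w, x⟫_ℝ)
        + (β * ρ) • gibbsCov X (ρ • w) (fun x => ⟪c + lam • w, x⟫_ℝ)) w := by
  have h₁ := hasGradientAt_iff_hasFDerivAt.mp (hasGradientAt_gibbsFreeEnergy hX c lam w)
  have h₂ := (hasGradientAt_iff_hasFDerivAt.mp
    (hasGradientAt_gibbsFreeEnergy hX (ρ • c) lam (ρ • w))).comp w
      ((hasFDerivAt_id w).const_smul ρ)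
  have hscale : (fun x => ⟪ρ • c + lam • ρ • w, x⟫_ℝ) = fun x => ρ * ⟪c + lam • w, x⟫_ℝ := by
    funext x
    rw [smul_comm lam ρ, ← smul_add, real_inner_smul_left]
  rw [rloss_eq_gibbsFreeEnergy hρ]
  refine hasGradientAt_iff_hasFDerivAt.mpr
    (((h₁.const_mul (1 - β)).add (h₂.const_mul (β / ρ))).congr_fderiv ?_)
  rw [hscale, gibbsCov_const_mul]
  ext v
  simp only [map_smul, ContinuousLinearMap.comp_smulₛₗ, ringHom_apply, ContinuousLinearMap.comp_id,
    add_apply, smul_apply, InnerProductSpace.toDual_apply_apply, smul_eq_mul, map_add, add_right_inj]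
  field_simp

end Gibbs

theorem gradient_rloss_correlation_identity_general {d : ℕ}
    (X : Finset (EuclideanSpace ℝ (Fin d))) (hX : X.Nonempty)
    (β ρ : ℝ) (hρ : ρ ∈ Set.Ioo (0 : ℝ) 1)
    (c : EuclideanSpace ℝ (Fin d)) (lam : ℝ) :
    ∀ w : EuclideanSpace ℝ (Fin d),
      ⟪gradient (rloss X β ρ lam c) w, c + lam • w⟫_ℝ
        = (1 - β) * gibbsVar X w (fun x => ⟪c + lam • w, x⟫_ℝ)
          + β * ρ * gibbsVar X (ρ • w) (fun x => ⟪c + lam • w, x⟫_ℝ) := by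
  intro w
  rw [(hasGradientAt_rloss hX hρ.1.ne' lam c w).gradient, inner_add_left, real_inner_smul_left,
    real_inner_smul_left, inner_gibbsCov_inner, inner_gibbsCov_inner]

/-- For every `w`, the regularized loss satisfies
`∇L_λ(w)·(c + λw) = (1−β)Var_{x∼φ(·;w)}[(c+λw)·x] + βρ Var_{x∼φ(·;ρw)}[(c+λw)·x]`. -/
theorem gradient_rloss_correlation_identity {d : ℕ} (hd : 1 ≤ d)
    (X : Finset (EuclideanSpace ℝ (Fin d))) (hX : X.Nonempty)
    (D : ℝ) (hD : ∀ x ∈ X, ‖x‖ ≤ D)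
    (β ρ : ℝ) (hβ : β ∈ Set.Ioo (0 : ℝ) 1) (hρ : ρ ∈ Set.Ioo (0 : ℝ) 1)
    (c : EuclideanSpace ℝ (Fin d)) (lam : ℝ) (hlam : 0 < lam) :
    ∀ w : EuclideanSpace ℝ (Fin d),
      ⟪gradient (rloss X β ρ lam c) w, c + lam • w⟫_ℝ
        = (1 - β) * gibbsVar X w (fun x => ⟪c + lam • w, x⟫_ℝ)
          + β * ρ * gibbsVar X (ρ • w) (fun x => ⟪c + lam • w, x⟫_ℝ) :=
  gradient_rloss_correlation_identity_general X hX β ρ hρ c lam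

end
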